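/- If n, d are natural numbers with r a nonnegative real, and L_n(r) := {x ∈ ℝⁿ⁺¹ : √(x1² + ⋯ + xn²) ≤ r·x_{n+1}}, then the inclusion L_n(1) ⊛ L_n(1) ⊆ L_n(1) ⊙ L_n(r) implies r ≥ n. -/

import Mathlib

open scoped TensorProduct
open TensorProduct

section Defs

variable {V V' V1 V2 : Type*}
  [AddCommGroup V] [Module ℝ V] [AddCommGroup V'] [Module ℝ V']
  [AddCommGroup V1] [Module ℝ V1] [AddCommGroup V2] [Module ℝ V2]

/-- The dual cone of a set `C`: linear functionals nonnegative on `C`. -/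
def dualCone (C : Set V) : Set (Module.Dual ℝ V) := {f | ∀ x ∈ C, 0 ≤ f x}

/-- The functional `f ⊗ g` on `V1 ⊗ V2`. -/
noncomputable def pairTensor (f : Module.Dual ℝ V1) (g : Module.Dual ℝ V2) :
    Module.Dual ℝ (V1 ⊗[ℝ] V2) :=
  (TensorProduct.lid ℝ ℝ).toLinearMap ∘ₗ TensorProduct.map f g

/-- The minimal tensor product of two cones: the convex hull of the product tensors. -/
def minTensor (C1 : Set V1) (C2 : Set V2) : Set (V1 ⊗[ℝ] V2) :=
  convexHull ℝ {z | ∃ x ∈ C1, ∃ y ∈ C2, z = x ⊗ₜ[ℝ] y}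

/-- The maximal tensor product of two cones: tensors nonnegative on product functionals. -/
def maxTensor (C1 : Set V1) (C2 : Set V2) : Set (V1 ⊗[ℝ] V2) :=
  {z | ∀ f ∈ dualCone C1, ∀ g ∈ dualCone C2, 0 ≤ pairTensor f g z}

/-- A cone: a set closed under multiplication by nonnegative scalars. -/
def IsConeSet (C : Set V) : Prop := ∀ x ∈ C, ∀ a : ℝ, 0 ≤ a → a • x ∈ C

/-- Topological closedness of a subset of a finite-dimensional real vector space,
expressed through (all) linear identifications with `Fin n → ℝ`. -/
def IsClosedSet (C : Set V) : Prop := ∀ (n : ℕ) (e : V ≃ₗ[ℝ] (Fin n → ℝ)), IsClosed (e '' C)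

/-- A proper cone: convex, closed, salient and generating. -/
def IsProperCone (C : Set V) : Prop :=
  Convex ℝ C ∧ IsClosedSet C ∧ IsConeSet C ∧ C ∩ (-C) = {0} ∧ Submodule.span ℝ C = ⊤

/-- A classical cone: the set of vectors with nonnegative coordinates in some basis,
i.e. the cone generated by a basis of the space. -/
def IsClassicalCone (C : Set V) : Prop :=
  ∃ (ι : Type) (b : Module.Basis ι ℝ V), C = {x | ∀ i, 0 ≤ b.repr x i}

/-- `C'` is a retract of `C` if there are positive maps `Φ, Ψ` with `Φ ∘ Ψ = id`. -/
def IsRetractOf (C' : Set V') (C : Set V) : Prop :=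
  ∃ (Φ : V →ₗ[ℝ] V') (Ψ : V' →ₗ[ℝ] V),
    (∀ x ∈ C, Φ x ∈ C') ∧ (∀ y ∈ C', Ψ y ∈ C) ∧ Φ ∘ₗ Ψ = LinearMap.id

/-- A polyhedral cone: the conical hull of finitely many vectors. -/
def IsPolyhedralCone (C : Set V) : Prop :=
  ∃ (k : ℕ) (v : Fin k → V),
    C = {x | ∃ c : Fin k → ℝ, (∀ i, 0 ≤ c i) ∧ x = ∑ i, c i • v i}

end Defs

/-- The Lorentz cone of parameter `r` in `ℝ^(n+1)`. -/
noncomputable def lorentz (n : ℕ) (r : ℝ) : Set (Fin (n + 1) → ℝ) :=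
  {x | Real.sqrt (∑ i : Fin n, x i.castSucc ^ 2) ≤ r * x (Fin.last n)}

/-! The tensor `z = ∑ᵢ eᵢ ⊗ eᵢ` separates the two cones. Since `L_n(1)` is self-dual, a pair
of functionals `f, g` nonnegative on it is given by two vectors of `L_n(1)`, and
`(f ⊗ g) z = ⟪f, g⟫ ≥ 0`; so `z ∈ L_n(1) ⊛ L_n(1)`. On the other hand, by Cauchy–Schwarz the
functional `w ↦ r w_{last,last} - ∑_{i<n} w_{ii}` is nonnegative on every `x ⊗ y` with
`x ∈ L_n(1)`, `y ∈ L_n(r)`, hence on `L_n(1) ⊙ L_n(r)`, while its value at `z` is `r - n`. -/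

section TensorCones

variable {V1 V2 : Type*} [AddCommGroup V1] [Module ℝ V1] [AddCommGroup V2] [Module ℝ V2]

@[simp]
lemma pairTensor_tmul (f : Module.Dual ℝ V1) (g : Module.Dual ℝ V2) (x : V1) (y : V2) :
    pairTensor f g (x ⊗ₜ y) = f x * g y := by
  simp [pairTensor]

lemma nonneg_of_mem_minTensor {C1 : Set V1} {C2 : Set V2} (Λ : Module.Dual ℝ (V1 ⊗[ℝ] V2))
    (hΛ : ∀ x ∈ C1, ∀ y ∈ C2, 0 ≤ Λ (x ⊗ₜ y)) {w : V1 ⊗[ℝ] V2}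
    (hw : w ∈ minTensor C1 C2) :
    0 ≤ Λ w := by
  refine convexHull_min ?_ (convex_halfSpace_ge Λ.isLinear 0) hw
  rintro _ ⟨x, hx, y, hy, rfl⟩
  exact hΛ x hx y hy

end TensorCones

namespace lorentz

variable {n : ℕ}

lemma abs_sum_mul_le {r s : ℝ} {u v : Fin (n + 1) → ℝ} (hu : u ∈ lorentz n r)
    (hv : v ∈ lorentz n s) :
    |∑ i : Fin n, u i.castSucc * v i.castSucc| ≤ r * u (Fin.last n) * (s * v (Fin.last n)) :=
  calc |∑ i : Fin n, u i.castSucc * v i.castSucc|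
      ≤ ∑ i : Fin n, |u i.castSucc| * |v i.castSucc| := by
        simpa only [abs_mul] using
          Finset.abs_sum_le_sum_abs (fun i : Fin n => u i.castSucc * v i.castSucc) _
    _ ≤ √(∑ i : Fin n, |u i.castSucc| ^ 2) * √(∑ i : Fin n, |v i.castSucc| ^ 2) :=
        Real.sum_mul_le_sqrt_mul_sqrt _ _ _
    _ = √(∑ i : Fin n, u i.castSucc ^ 2) * √(∑ i : Fin n, v i.castSucc ^ 2) := by
        simp only [sq_abs]
    _ ≤ r * u (Fin.last n) * (s * v (Fin.last n)) :=
        mul_le_mul hu hv (Real.sqrt_nonneg _) ((Real.sqrt_nonneg _).trans hu)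

lemma dotProduct_nonneg {u v : Fin (n + 1) → ℝ} (hu : u ∈ lorentz n 1)
    (hv : v ∈ lorentz n 1) :
    0 ≤ u ⬝ᵥ v := by
  have hcs := abs_sum_mul_le hu hv
  rw [dotProduct, Fin.sum_univ_castSucc]
  linarith [neg_abs_le (∑ i : Fin n, u i.castSucc * v i.castSucc)]

lemma single_last_mem : Pi.single (Fin.last n) 1 ∈ lorentz n 1 := by
  simp [lorentz, (Fin.castSucc_lt_last _).ne]

lemma mem_of_mem_dualCone {f : Module.Dual ℝ (Fin (n + 1) → ℝ)}
    (hf : f ∈ dualCone (lorentz n 1)) :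
    (fun i => f (Pi.single i 1)) ∈ lorentz n 1 := by
  set v : Fin (n + 1) → ℝ := fun i => f (Pi.single i 1)
  set s := √(∑ i : Fin n, v i.castSucc ^ 2)
  have hs_sq : s ^ 2 = ∑ i : Fin n, v i.castSucc ^ 2 :=
    Real.sq_sqrt (Finset.sum_nonneg fun i _ => sq_nonneg _)
  have hv_last : 0 ≤ v (Fin.last n) := hf _ single_last_mem
  -- test `f` against the boundary vector of `L_n(1)` opposite to `v`
  set x : Fin (n + 1) → ℝ := Fin.snoc (fun i : Fin n => -v i.castSucc) s
  have hx : x ∈ lorentz n 1 := by simp [lorentz, x, s]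
  have hfx : f x = s * v (Fin.last n) - s ^ 2 := by
    rw [pi_eq_sum_univ' x, map_sum, Fin.sum_univ_castSucc, hs_sq]
    simp only [map_smul, smul_eq_mul, x, Fin.snoc_castSucc, Fin.snoc_last, neg_mul,
      Finset.sum_neg_distrib, sq]
    ring
  show s ≤ 1 * v (Fin.last n)
  nlinarith [hf x hx, Real.sqrt_nonneg (∑ i : Fin n, v i.castSucc ^ 2)]

end lorentz

lemma sum_single_tmul_single_mem_maxTensor (n : ℕ) :
    ∑ i, Pi.single i 1 ⊗ₜ[ℝ] Pi.single i 1 ∈ maxTensor (lorentz n 1) (lorentz n 1) := by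
  intro f hf g hg
  have hz : pairTensor f g (∑ i, Pi.single i 1 ⊗ₜ[ℝ] Pi.single i 1)
      = (fun i => f (Pi.single i 1)) ⬝ᵥ (fun i => g (Pi.single i 1)) := by
    simp [dotProduct]
  rw [hz]
  exact lorentz.dotProduct_nonneg (lorentz.mem_of_mem_dualCone hf) (lorentz.mem_of_mem_dualCone hg)

theorem stmt12_general (n : ℕ) (r : ℝ)
    (h : maxTensor (lorentz n 1) (lorentz n 1) ⊆ minTensor (lorentz n 1) (lorentz n r)) :
    (n : ℝ) ≤ r := by
  let proj (i : Fin (n + 1)) : Module.Dual ℝ (Fin (n + 1) → ℝ) := LinearMap.proj i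
  let Λ := r • pairTensor (proj (Fin.last n)) (proj (Fin.last n))
    - ∑ i : Fin n, pairTensor (proj i.castSucc) (proj i.castSucc)
  have hΛ : ∀ x ∈ lorentz n 1, ∀ y ∈ lorentz n r, 0 ≤ Λ (x ⊗ₜ y) := by
    intro x hx y hy
    have hcs := lorentz.abs_sum_mul_le hx hy
    simp only [Λ, proj, LinearMap.sub_apply, LinearMap.smul_apply, LinearMap.sum_apply,
      pairTensor_tmul, LinearMap.proj_apply, smul_eq_mul]
    linarith [le_abs_self (∑ i : Fin n, x i.castSucc * y i.castSucc)]
  have hΛz : Λ (∑ i, Pi.single i 1 ⊗ₜ[ℝ] Pi.single i 1) = r - n := by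
    simp [Λ, proj, Fin.sum_univ_castSucc, Pi.single_apply, (Fin.castSucc_lt_last _).ne]
  have hΛz_nonneg := nonneg_of_mem_minTensor Λ hΛ (h (sum_single_tmul_single_mem_maxTensor n))
  linarith

/-- If `L_n(1) ⊛ L_n(1) ⊆ L_n(1) ⊙ L_n(r)` then `r ≥ n`. -/
theorem stmt12 (n : ℕ) (r : ℝ) (hr : 0 ≤ r)
    (h : maxTensor (lorentz n 1) (lorentz n 1) ⊆ minTensor (lorentz n 1) (lorentz n r)) :
    (n : ℝ) ≤ r :=
  stmt12_general n r h
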